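/- Fix δ with 0 < δ < ρ − L and suppose that in Algorithm niAPG every inexact proximal step satisfies F(x_{k+1}) ≤ F(v_k) − (δ/2)·‖x_{k+1} − v_k‖² for all k ≥ 1, and that F is bounded below. Let c₁ = max_{t = 1,…,q+1} F(x_t) − inf F and write a_t = ‖x_{t+1} − v_t‖². Then: (i) lim_{k→∞} min_{t ∈ W(k)} a_t = 0; and (ii) for every K ≥ 1, min_{k = 1,…,K} min_{t ∈ W(k)} a_t ≤ 2·(q+1)·c₁ / (δ·K). -/

import Mathlib

/-!
Write `φ t = F (x t)` and `Δ k` for the maximum of `φ` over the window `W(k)`. Since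
`F (v k) ≤ Δ k`, the inexact step gives `φ (k + 1) ≤ Δ k - (δ / 2) a k`. Hence `Δ` is
nonincreasing and bounded below, and over `q + 1` consecutive steps it drops by `δ / 2` times
the smallest `a t` in the window, which forces the window minima to `0`. For the rate, if
`a t ≥ μ` for all `t ≤ K`, an induction shows `φ (t + 1) ≤ φ 1 - t δ μ / (2 (q + 1))`, and
comparing `t = K` with `inf F` gives the bound.
-/

open Filter Topology

section WindowDescent

theorem nonempty_window {q k : ℕ} (hk : 1 ≤ k) : (Finset.Icc (max 1 (k - q)) k).Nonempty :=
  Finset.nonempty_Icc.mpr (by omega)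

def IsWindowMax (q : ℕ) (φ Δ : ℕ → ℝ) : Prop :=
  ∀ k (hk : 1 ≤ k), Δ k = (Finset.Icc (max 1 (k - q)) k).sup' (nonempty_window hk) φ

variable {q : ℕ} {φ Δ : ℕ → ℝ}

namespace IsWindowMax

theorem le_of_mem (hΔ : IsWindowMax q φ Δ) {k s : ℕ}
    (hs : s ∈ Finset.Icc (max 1 (k - q)) k) : φ s ≤ Δ k := by
  have hk : 1 ≤ k := by rw [Finset.mem_Icc] at hs; omega
  rw [hΔ k hk]
  exact Finset.le_sup' φ hs

theorem le_of_forall_le (hΔ : IsWindowMax q φ Δ) {k : ℕ} (hk : 1 ≤ k) {B : ℝ}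
    (hB : ∀ s ∈ Finset.Icc (max 1 (k - q)) k, φ s ≤ B) : Δ k ≤ B := by
  rw [hΔ k hk]
  exact Finset.sup'_le _ _ hB

theorem antitone (hΔ : IsWindowMax q φ Δ) (hnew : ∀ k, 1 ≤ k → φ (k + 1) ≤ Δ k) :
    Antitone fun n => Δ (n + 1) := by
  refine antitone_nat_of_succ_le fun n => hΔ.le_of_forall_le (by omega) fun s hs => ?_
  rw [Finset.mem_Icc] at hs
  rcases Nat.lt_or_ge s (n + 2) with hsn | hsn
  · exact hΔ.le_of_mem (Finset.mem_Icc.mpr ⟨by omega, by omega⟩)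
  · obtain rfl : s = n + 2 := by omega
    exact hnew (n + 1) (by omega)

/-- After `q + 1` steps every entry of the window has been replaced. -/
theorem le_sub_of_forall_le {b : ℕ → ℝ} (hΔ : IsWindowMax q φ Δ)
    (hdesc : ∀ k, 1 ≤ k → φ (k + 1) ≤ Δ k - b k) (hb : ∀ k, 0 ≤ b k)
    {k : ℕ} (hk : 1 ≤ k) {β : ℝ} (hβ : ∀ t ∈ Finset.Icc k (k + q), β ≤ b t) :
    Δ (k + q + 1) ≤ Δ k - β := by
  have hanti := hΔ.antitone fun k hk => (hdesc k hk).trans (sub_le_self _ (hb k))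
  refine hΔ.le_of_forall_le (by omega) fun s hs => ?_
  rw [Finset.mem_Icc] at hs
  obtain ⟨t, rfl⟩ : ∃ t, s = t + 1 := ⟨s - 1, by omega⟩
  have hΔt : Δ t ≤ Δ k := by
    obtain ⟨i, rfl⟩ : ∃ i, k = i + 1 := ⟨k - 1, by omega⟩
    obtain ⟨j, rfl⟩ : ∃ j, t = j + 1 := ⟨t - 1, by omega⟩
    exact hanti (by omega)
  linarith [hdesc t (by omega), hβ t (Finset.mem_Icc.mpr ⟨by omega, by omega⟩)]

/-- The window at `t` reaches back only to `t - q`, so by induction its maximum is at most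
`φ 1 - (t - q - 1) g`, and the new value lies `(q + 1) g` below that. -/
theorem le_sub_mul_of_forall_le_sub {g : ℝ} (hΔ : IsWindowMax q φ Δ) (hg : 0 ≤ g) {K : ℕ}
    (hdesc : ∀ t, 1 ≤ t → t ≤ K → φ (t + 1) ≤ Δ t - (q + 1) * g) :
    φ (K + 1) ≤ φ 1 - K * g := by
  suffices h : ∀ n ≤ K, φ (n + 1) ≤ φ 1 - n * g from h K le_rfl
  intro n
  induction n using Nat.strong_induction_on with
  | _ n ih =>
    intro hnK
    rcases Nat.eq_zero_or_pos n with rfl | hn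
    · simp
    have hwin : Δ n ≤ φ 1 - ((n : ℝ) - q - 1) * g := by
      refine hΔ.le_of_forall_le hn fun s hs => ?_
      rw [Finset.mem_Icc] at hs
      obtain ⟨t, rfl⟩ : ∃ t, s = t + 1 := ⟨s - 1, by omega⟩
      have hts : (n : ℝ) ≤ t + q + 1 := by exact_mod_cast (by omega : n ≤ t + q + 1)
      nlinarith [ih t (by omega) (by omega)]
    nlinarith [hdesc n hn hnK]

variable {l c : ℝ} {a m : ℕ → ℝ}

theorem tendsto_windowMin_zero (hΔ : IsWindowMax q φ Δ) (hl : ∀ t, l ≤ φ t) (hc : 0 < c)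
    (ha : ∀ t, 0 ≤ a t) (hdesc : ∀ k, 1 ≤ k → φ (k + 1) ≤ Δ k - c * a k)
    (hm : ∀ j, m j = (Finset.Icc (max 1 (j + 1 - q)) (j + 1)).inf'
      (nonempty_window (Nat.le_add_left 1 j)) a) :
    Tendsto m atTop (𝓝 0) := by
  have hanti := hΔ.antitone fun k hk =>
    (hdesc k hk).trans (sub_le_self _ (mul_nonneg hc.le (ha k)))
  have hbdd : BddBelow (Set.range fun n => Δ (n + 1)) := ⟨l, by
    rintro _ ⟨n, rfl⟩
    exact (hl _).trans (hΔ.le_of_mem (Finset.mem_Icc.mpr ⟨by omega, le_rfl⟩))⟩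
  have hlim := tendsto_atTop_ciInf hanti hbdd
  have hgap : Tendsto (fun i => (Δ (i + 1) - Δ (i + 1 + q + 1)) / c) atTop (𝓝 0) := by
    have := (hlim.sub (hlim.comp (tendsto_add_atTop_nat (q + 1)))).div_const c
    simpa [Function.comp_def, add_assoc, add_comm, add_left_comm] using this
  rw [← tendsto_add_atTop_iff_nat q]
  refine squeeze_zero (fun i => ?_) (fun i => ?_) hgap
  · rw [hm]
    exact Finset.le_inf' _ _ fun t _ => ha t
  · have hβ : ∀ t ∈ Finset.Icc (i + 1) (i + 1 + q), c * m (i + q) ≤ c * a t := by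
      intro t ht
      refine mul_le_mul_of_nonneg_left ?_ hc.le
      rw [hm]
      exact Finset.inf'_le _ (by rw [Finset.mem_Icc] at ht ⊢; omega)
    rw [le_div_iff₀ hc]
    linarith [hΔ.le_sub_of_forall_le hdesc (fun k => mul_nonneg hc.le (ha k)) (by omega) hβ]

theorem inf'_windowMin_le (hΔ : IsWindowMax q φ Δ) (hl : ∀ t, l ≤ φ t) (hc : 0 < c)
    (ha : ∀ t, 0 ≤ a t) (hdesc : ∀ k, 1 ≤ k → φ (k + 1) ≤ Δ k - c * a k)
    (hm : ∀ j, m j = (Finset.Icc (max 1 (j + 1 - q)) (j + 1)).inf'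
      (nonempty_window (Nat.le_add_left 1 j)) a)
    {K : ℕ} (hK : 1 ≤ K) :
    (Finset.range K).inf' ⟨0, Finset.mem_range.mpr hK⟩ m ≤
      (q + 1) * (φ 1 - l) / (c * K) := by
  set μ := (Finset.range K).inf' ⟨0, Finset.mem_range.mpr hK⟩ m
  have hμa : ∀ t, 1 ≤ t → t ≤ K → μ ≤ a t := by
    intro t ht htK
    refine (Finset.inf'_le m (Finset.mem_range.mpr (by omega : t - 1 < K))).trans ?_
    rw [hm]
    exact Finset.inf'_le _ (Finset.mem_Icc.mpr ⟨by omega, by omega⟩)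
  have hμ0 : 0 ≤ μ := Finset.le_inf' _ _ fun j _ => by
    rw [hm]
    exact Finset.le_inf' _ _ fun t _ => ha t
  have hq : (0 : ℝ) < q + 1 := by positivity
  have hlin := hΔ.le_sub_mul_of_forall_le_sub (g := c * μ / (q + 1)) (by positivity)
    fun t ht htK => by
      rw [mul_div_cancel₀ _ hq.ne']
      nlinarith [hdesc t ht, hμa t ht htK]
  have hKpos : (0 : ℝ) < K := by exact_mod_cast hK
  rw [le_div_iff₀ (by positivity)]
  have : K * (c * μ / (q + 1)) ≤ φ 1 - l := by linarith [hl (K + 1)]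
  rw [mul_div_assoc', div_le_iff₀ hq] at this
  linarith

end IsWindowMax

end WindowDescent

theorem niAPG_nonconvex_rate
    {E : Type*} [NormedAddCommGroup E]
    (F : E → ℝ) (δ : ℝ)
    (hbdd : BddBelow (Set.range F))
    (hδ : 0 < δ)
    (q : ℕ) (x y v : ℕ → E) (Δ : ℕ → ℝ)
    (hΔ : ∀ k, ∀ hk : 1 ≤ k, Δ k =
      (Finset.Icc (max 1 (k - q)) k).sup' (Finset.nonempty_Icc.mpr (by omega))
        (fun t => F (x t)))
    (hv : ∀ k, 1 ≤ k → v k = if F (y k) ≤ Δ k then y k else x k)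
    (hdec : ∀ k, 1 ≤ k →
      F (x (k + 1)) ≤ F (v k) - (δ / 2) * ‖x (k + 1) - v k‖ ^ 2)
    (c₁ : ℝ)
    (hc₁ : c₁ = (Finset.Icc 1 (q + 1)).sup' (Finset.nonempty_Icc.mpr (by omega))
      (fun t => F (x t)) - sInf (Set.range F))
    -- `m j` is `min_{t ∈ W(j+1)} ‖x_{t+1} − v_t‖²`
    (m : ℕ → ℝ)
    (hm : ∀ j : ℕ, m j = (Finset.Icc (max 1 (j + 1 - q)) (j + 1)).inf'
      (Finset.nonempty_Icc.mpr (by omega)) (fun t => ‖x (t + 1) - v t‖ ^ 2)) :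
    Tendsto m atTop (nhds 0) ∧
    ∀ K : ℕ, ∀ hK : 1 ≤ K,
      (Finset.range K).inf' (Finset.nonempty_range_iff.mpr (by omega)) m ≤
        2 * ((q : ℝ) + 1) * c₁ / (δ * (K : ℝ)) := by
  have hW : IsWindowMax q (fun t => F (x t)) Δ := hΔ
  have hl : ∀ t, sInf (Set.range F) ≤ F (x t) := fun t => csInf_le hbdd ⟨x t, rfl⟩
  have hdesc : ∀ k, 1 ≤ k → F (x (k + 1)) ≤ Δ k - δ / 2 * ‖x (k + 1) - v k‖ ^ 2 := by
    intro k hk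
    have hvΔ : F (v k) ≤ Δ k := by
      rw [hv k hk]
      split_ifs with hy
      · exact hy
      · exact hW.le_of_mem (Finset.mem_Icc.mpr ⟨by omega, le_rfl⟩)
    linarith [hdec k hk]
  have hc : (0 : ℝ) < δ / 2 := by positivity
  refine ⟨hW.tendsto_windowMin_zero hl hc (fun _ => sq_nonneg _) hdesc hm, fun K hK => ?_⟩
  have hx1 : F (x 1) - sInf (Set.range F) ≤ c₁ := by
    rw [hc₁]
    linarith [Finset.le_sup' (fun t => F (x t)) (Finset.mem_Icc.mpr ⟨le_rfl, by omega⟩ :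
      1 ∈ Finset.Icc 1 (q + 1))]
  calc _ ≤ (q + 1) * (F (x 1) - sInf (Set.range F)) / (δ / 2 * K) :=
        hW.inf'_windowMin_le hl hc (fun _ => sq_nonneg _) hdesc hm hK
    _ ≤ (q + 1) * c₁ / (δ / 2 * K) := by gcongr
    _ = 2 * ((q : ℝ) + 1) * c₁ / (δ * (K : ℝ)) := by field_simp
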